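/- For any instance with exactly 2 agents whose true valuations are nonnegative monotone subadditive set functions, and any bid profile (b_1, b_2) in which agent i's bid b_i is a best response to the other agent's bid, the allocation produced by Preferred-Item-E-C-E on (b_1, b_2) is (1/2)-EF1 from agent i's perspective with respect to agent i's true valuation. -/

import Mathlib

/-!
Formalization of the strategic Envy-Cycle-Elimination (E-C-E) setting with monotone
subadditive (set-function) valuations.

There are `n` agents and `m` goods (`Fin m`), with the predefined ordering of agents
and goods given by the orders on `Fin n` and `Fin m`.  A bid consists of a reported
nonnegative monotone subadditive set function together with a preference list (a
permutation of the goods); the envy graph is defined using the reported set-function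
values.  E-C-E starts from empty bundles and, while unallocated goods remain, selects
a source of the envy graph will (envious sources have priority, ties broken by the
predefined agent ordering), adds to that agent's bundle the earliest unallocated good
in her preference list, and then repeatedly eliminates envy cycles, in a fixed order,
until the envy graph has a source.  This is the Preferred-Item-E-C-E variant.
-/

open scoped Classical
open Finset

/-- A bid of an agent in the subadditive setting: a reported nonnegative monotone
subadditive set function together with a preference list, a permutation of the
goods. -/
structure SetBid (m : ℕ) where
  val : Finset (Fin m) → ℝ
  nonneg : ∀ S, 0 ≤ val S
  mono : ∀ S T, val S ≤ val (S ∪ T)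
  subadd : ∀ S T, val (S ∪ T) ≤ val S + val T
  pref : Equiv.Perm (Fin m)

namespace SubECE

variable {n m : ℕ}

/-- Envy-graph edge: agent `i` envies agent `j` (w.r.t. the reported set-function
valuations) under the partial allocation `P`. -/
def envies (b : Fin n → SetBid m) (P : Fin n → Finset (Fin m)) (i j : Fin n) : Prop :=
  (b i).val (P i) < (b i).val (P j)

/-- The sources (vertices of in-degree 0) of the envy graph. -/
noncomputable def sources (b : Fin n → SetBid m) (P : Fin n → Finset (Fin m)) :
    Finset (Fin n) :=
  univ.filter fun i => ∀ j, ¬ envies b P j i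

/-- The envy cycles of the current envy graph, represented as cyclic permutations `σ`
of the agents such that every agent moved by `σ` envies her image under `σ`. -/
noncomputable def cycleSet (b : Fin n → SetBid m) (P : Fin n → Finset (Fin m)) :
    Finset (Equiv.Perm (Fin n)) :=
  univ.filter fun σ => σ.IsCycle ∧ ∀ i, σ i ≠ i → envies b P i (σ i)

/-- A fixed enumeration of the permutations of the agents, providing the fixed
(lexicographic) order in which envy cycles are eliminated. -/
noncomputable def permIdx (n : ℕ) :
    Equiv.Perm (Fin n) ≃ Fin (Fintype.card (Equiv.Perm (Fin n))) :=
  Fintype.equivFin _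

/-- Eliminate one envy cycle (the first one in the fixed order): every agent on the
cycle receives the bundle of the agent she envies. -/
noncomputable def elimOnce (b : Fin n → SetBid m) (P : Fin n → Finset (Fin m)) :
    Fin n → Finset (Fin m) :=
  if h : (cycleSet b P).Nonempty then
    let σ := (permIdx n).symm (((cycleSet b P).image (permIdx n)).min' (h.image _))
    fun i => P (σ i)
  else P

/-- Repeatedly eliminate envy cycles until the envy graph has a source. -/
noncomputable def resolve (b : Fin n → SetBid m) :
    ℕ → (Fin n → Finset (Fin m)) → Fin n → Finset (Fin m)
  | 0, P => P
  | fuel + 1, P => if (sources b P).Nonempty then P else resolve b fuel (elimOnce b P)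

/-- Source selection: among multiple sources, those having at least one outgoing envy
edge have priority, ties broken by the predefined ordering of the agents. -/
noncomputable def priAgent (b : Fin n → SetBid m) (P : Fin n → Finset (Fin m)) :
    Option (Fin n) :=
  if h' : ((sources b P).filter fun i => ∃ j, envies b P i j).Nonempty then
    some (((sources b P).filter fun i => ∃ j, envies b P i j).min' h')
  else if h : (sources b P).Nonempty then some ((sources b P).min' h) else none

/-- The earliest unallocated good in the preference list `pref`. -/
noncomputable def preferredItem (pref : Equiv.Perm (Fin m)) (R : Finset (Fin m))
    (hR : R.Nonempty) : Fin m :=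
  pref.symm ((R.image pref).min' (hR.image _))

/-- The state (current partial allocation, remaining unallocated goods) of the
Preferred-Item-E-C-E run after a given number of steps. -/
noncomputable def stateECE (b : Fin n → SetBid m) :
    ℕ → (Fin n → Finset (Fin m)) × Finset (Fin m)
  | 0 => (fun _ => ∅, univ)
  | k + 1 =>
    let s := stateECE b k
    if hR : s.2.Nonempty then
      match priAgent b s.1 with
      | none => s
      | some i =>
        let g := preferredItem (b i).pref s.2 hR
        (resolve b (n * n + 1) (fun j => if j = i then insert g (s.1 j) else s.1 j),
          s.2.erase g)
    else s

/-- Preferred-Item-E-C-E with reported set-function valuations: envious sources have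
priority, and the chosen agent receives the earliest unallocated good in her
preference list. -/
noncomputable def PreferredItemECE (b : Fin n → SetBid m) : Fin n → Finset (Fin m) :=
  (stateECE b m).1

/-- The allocation `A` is `α`-EF1 from agent `i`'s perspective w.r.t. the set-function
valuation `v`: for every agent `j` with nonempty bundle there is a good `g ∈ A j` with
`v (A i) ≥ α · v (A j \ {g})`. -/
def EF1From (α : ℝ) (v : Finset (Fin m) → ℝ) (A : Fin n → Finset (Fin m))
    (i : Fin n) : Prop :=
  ∀ j : Fin n, (A j).Nonempty → ∃ g ∈ A j, α * v ((A j).erase g) ≤ v (A i)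

/-- Agent `i`'s bid in the profile `b` is a best response to the others' bids, w.r.t.
her true set-function valuation `v`: no alternative bid gives her a bundle of strictly
larger true value. -/
def BestResponse (Mech : (Fin n → SetBid m) → Fin n → Finset (Fin m))
    (v : Finset (Fin m) → ℝ) (b : Fin n → SetBid m) (i : Fin n) : Prop :=
  ∀ b' : SetBid m, v (Mech (Function.update b i b') i) ≤ v (Mech b i)

end SubECE

open SubECE

/-!
If agent `i` deviates to bidding her true valuation (keeping her preference list), the run of
Envy-Cycle-Elimination keeps her EF1 towards every other bundle with respect to that valuation:
cycle elimination only permutes bundles while weakly improving every agent's own bundle, and a good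
is only ever added to a source, whom `i` does not envy. With two agents a source always exists after
at most one cycle elimination, so the truthful run allocates every good. Her truthful bundle and
the other bundle minus its EF1 witness then cover all goods but one, and each is worth at most her
truthful bundle; by subadditivity every bundle minus a suitable good is worth at most twice that,
hence at most twice her best-response bundle.
-/

open Finset

lemma monotone_of_le_union {α : Type*} [DecidableEq α] {v : Finset α → ℝ} (h : ∀ S T, v S ≤ v (S ∪ T)) :
    Monotone v := fun S T hST => by
  simpa only [union_eq_right.mpr hST] using h S T

lemma SetBid.monotone {m : ℕ} (w : SetBid m) : Monotone w.val :=
  monotone_of_le_union w.mono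

lemma Finset.exists_erase_subset_erase {α : Type*} [DecidableEq α] {S T : Finset α} (a : α)
    (hS : S.Nonempty) (hST : S ⊆ T) : ∃ g ∈ S, S.erase g ⊆ T.erase a := by
  by_cases ha : a ∈ S
  · exact ⟨a, ha, erase_subset_erase a hST⟩
  · obtain ⟨g, hg⟩ := hS
    exact ⟨g, hg, (erase_subset g S).trans (subset_erase.mpr ⟨hST, ha⟩)⟩

lemma exists_erase_val_le_two_mul {α : Type*} [Fintype α] [DecidableEq α] {v : Finset α → ℝ}
    (hnn : ∀ S, 0 ≤ v S) (hv : Monotone v) (hsub : ∀ S T, v (S ∪ T) ≤ v S + v T)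
    {X Y : Finset α} (hXY : ∀ g, g ∈ X ∨ g ∈ Y) (hY : Y.Nonempty → ∃ g ∈ Y, v (Y.erase g) ≤ v X)
    {S : Finset α} (hS : S.Nonempty) : ∃ g ∈ S, v (S.erase g) ≤ 2 * v X := by
  rcases Y.eq_empty_or_nonempty with rfl | hY'
  · obtain ⟨g, hg⟩ := hS
    have hX : S.erase g ⊆ X := fun x _ => (hXY x).resolve_right (notMem_empty x)
    exact ⟨g, hg, by linarith [hv hX, hnn X]⟩
  · obtain ⟨g₀, -, hg₀⟩ := hY hY'
    obtain ⟨g, hg, hS'⟩ := exists_erase_subset_erase g₀ hS (subset_univ S)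
    have hcover : univ.erase g₀ ⊆ X ∪ Y.erase g₀ := fun x hx => by
      rcases hXY x with h | h
      · exact mem_union_left _ h
      · exact mem_union_right _ (mem_erase.mpr ⟨ne_of_mem_erase hx, h⟩)
    exact ⟨g, hg, by linarith [hv (hS'.trans hcover), hsub X (Y.erase g₀)]⟩

namespace SubECE

variable {n m : ℕ}

section Envy

variable {b : Fin n → SetBid m} {P : Fin n → Finset (Fin m)}

lemma not_envies_self (k : Fin n) : ¬ envies b P k k := lt_irrefl _

lemma mem_sources {a : Fin n} : a ∈ sources b P ↔ ∀ k, ¬ envies b P k a := by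
  simp [sources]

lemma le_val_of_mem_cycleSet {σ : Equiv.Perm (Fin n)} (hσ : σ ∈ cycleSet b P) (k : Fin n) :
    (b k).val (P k) ≤ (b k).val (P (σ k)) := by
  by_cases hk : σ k = k
  · rw [hk]
  · exact ((mem_filter.mp hσ).2.2 k hk).le

lemma exists_mem_cycleSet_elimOnce_eq (h : (cycleSet b P).Nonempty) :
    ∃ σ ∈ cycleSet b P, elimOnce b P = fun k => P (σ k) := by
  obtain ⟨σ, hσ, hmin⟩ := mem_image.mp (min'_mem _ (h.image (permIdx n)))
  refine ⟨σ, hσ, ?_⟩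
  rw [elimOnce, dif_pos h, ← hmin, Equiv.symm_apply_apply]

lemma elimOnce_of_not_nonempty (h : ¬ (cycleSet b P).Nonempty) : elimOnce b P = P := by
  rw [elimOnce, dif_neg h]

lemma exists_perm_elimOnce_eq : ∃ σ : Equiv.Perm (Fin n),
    (∀ k, (b k).val (P k) ≤ (b k).val (P (σ k))) ∧ elimOnce b P = fun k => P (σ k) := by
  by_cases h : (cycleSet b P).Nonempty
  · obtain ⟨σ, hσ, hel⟩ := exists_mem_cycleSet_elimOnce_eq h
    exact ⟨σ, le_val_of_mem_cycleSet hσ, hel⟩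
  · exact ⟨1, fun _ => le_rfl, elimOnce_of_not_nonempty h⟩

lemma resolve_of_sources_nonempty (h : (sources b P).Nonempty) (fuel : ℕ) :
    resolve b fuel P = P := by
  cases fuel <;> simp [resolve, h]

lemma resolve_induction (p : (Fin n → Finset (Fin m)) → Prop) (hp : ∀ P, p P → p (elimOnce b P)) :
    ∀ fuel P, p P → p (resolve b fuel P)
  | 0, _, hP => hP
  | fuel + 1, P, hP => by
    rw [resolve]
    split_ifs
    exacts [hP, resolve_induction p hp fuel _ (hp P hP)]

lemma exists_priAgent_eq_some (h : (sources b P).Nonempty) : ∃ a, priAgent b P = some a := by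
  unfold priAgent
  split_ifs
  exacts [⟨_, rfl⟩, ⟨_, rfl⟩]

lemma priAgent_mem_sources {a : Fin n} (h : priAgent b P = some a) : a ∈ sources b P := by
  unfold priAgent at h
  split_ifs at h with h₁ h₂ <;> cases h
  exacts [(mem_filter.mp (min'_mem _ h₁)).1, min'_mem _ h₂]

end Envy

lemma preferredItem_mem (pref : Equiv.Perm (Fin m)) {R : Finset (Fin m)} (hR : R.Nonempty) :
    preferredItem pref R hR ∈ R := by
  obtain ⟨r, hr, hmin⟩ := mem_image.mp (min'_mem _ (hR.image pref))
  rwa [preferredItem, ← hmin, Equiv.symm_apply_apply]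

-- Spelled exactly as the update in `stateECE` (rather than via `Function.update`), so that a step
-- of the run unfolds to it by `rfl`.
def give (P : Fin n → Finset (Fin m)) (a : Fin n) (g : Fin m) : Fin n → Finset (Fin m) :=
  fun j => if j = a then insert g (P j) else P j

section Give

variable {P : Fin n → Finset (Fin m)} {a : Fin n} {g : Fin m}

lemma subset_give (j : Fin n) : P j ⊆ give P a g j := by
  unfold give
  split_ifs
  exacts [subset_insert g (P j), subset_rfl]

lemma give_self : give P a g a = insert g (P a) := if_pos rfl

lemma give_of_ne {j : Fin n} (h : j ≠ a) : give P a g j = P j := if_neg h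

end Give

section EF1

variable {v : Finset (Fin m) → ℝ} {P : Fin n → Finset (Fin m)} {i : Fin n}

lemma EF1From.comp_perm {α : ℝ} (h : EF1From α v P i) (σ : Equiv.Perm (Fin n))
    (hi : v (P i) ≤ v (P (σ i))) : EF1From α v (fun k => P (σ k)) i :=
  fun j hj => (h (σ j) hj).imp fun _ ⟨hg, hle⟩ => ⟨hg, hle.trans hi⟩

lemma EF1From.give_of_le (hv : Monotone v) (h : EF1From 1 v P i) {a : Fin n}
    (hai : v (P a) ≤ v (P i)) (g : Fin m) : EF1From 1 v (give P a g) i := by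
  have hi : v (P i) ≤ v (give P a g i) := hv (subset_give i)
  intro j hj
  by_cases hja : j = a
  · subst hja
    refine ⟨g, give_self ▸ mem_insert_self g (P j), ?_⟩
    rw [give_self, one_mul]
    exact (hv (erase_insert_subset g (P j))).trans (hai.trans hi)
  · rw [give_of_ne hja] at hj ⊢
    obtain ⟨g', hg', hle⟩ := h j hj
    exact ⟨g', hg', hle.trans hi⟩

variable {b : Fin n → SetBid m}

lemma EF1From.elimOnce (h : EF1From 1 (b i).val P i) : EF1From 1 (b i).val (elimOnce b P) i := by
  obtain ⟨σ, hσ, hel⟩ := exists_perm_elimOnce_eq (b := b) (P := P)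
  rw [hel]
  exact h.comp_perm σ (hσ i)

end EF1

section Run

variable {b : Fin n → SetBid m} {k : ℕ}

lemma stateECE_succ_of_not_nonempty (hR : ¬ (stateECE b k).2.Nonempty) :
    stateECE b (k + 1) = stateECE b k := by
  rw [stateECE, dif_neg hR]

lemma stateECE_succ_of_priAgent_eq_none (hR : (stateECE b k).2.Nonempty)
    (h : priAgent b (stateECE b k).1 = none) : stateECE b (k + 1) = stateECE b k := by
  rw [stateECE, dif_pos hR, h]

lemma stateECE_succ_of_priAgent_eq_some (hR : (stateECE b k).2.Nonempty) {a : Fin n}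
    (h : priAgent b (stateECE b k).1 = some a) :
    stateECE b (k + 1) =
      (resolve b (n * n + 1) (give (stateECE b k).1 a (preferredItem (b a).pref _ hR)),
        (stateECE b k).2.erase (preferredItem (b a).pref _ hR)) := by
  rw [stateECE, dif_pos hR, h]
  rfl

lemma stateECE_induction (p : (Fin n → Finset (Fin m)) × Finset (Fin m) → Prop)
    (h₀ : p (fun _ => ∅, univ))
    (hstep : ∀ P R a g, g ∈ R → a ∈ sources b P → p (P, R) →
      p (resolve b (n * n + 1) (give P a g), R.erase g)) (k : ℕ) :
    p (stateECE b k) := by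
  induction k with
  | zero => exact h₀
  | succ k ih =>
    by_cases hR : (stateECE b k).2.Nonempty
    · cases ha : priAgent b (stateECE b k).1 with
      | none => rwa [stateECE_succ_of_priAgent_eq_none hR ha]
      | some a =>
        rw [stateECE_succ_of_priAgent_eq_some hR ha]
        exact hstep _ _ a _ (preferredItem_mem _ hR) (priAgent_mem_sources ha) ih
    · rwa [stateECE_succ_of_not_nonempty hR]

lemma EF1From_stateECE (i : Fin n) (k : ℕ) : EF1From 1 (b i).val (stateECE b k).1 i := by
  refine stateECE_induction (fun s => EF1From 1 (b i).val s.1 i) ?_ ?_ k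
  · intro j hj
    simp at hj
  · intro P _ a g _ ha hP
    have hai : (b i).val (P a) ≤ (b i).val (P i) := not_lt.mp (mem_sources.mp ha i)
    exact resolve_induction (fun Q => EF1From 1 (b i).val Q i) (fun _ => EF1From.elimOnce) _ _
      (hP.give_of_le (b i).monotone hai g)

lemma exists_mem_stateECE_of_notMem (k : ℕ) {g : Fin m} (hg : g ∉ (stateECE b k).2) :
    ∃ j, g ∈ (stateECE b k).1 j := by
  revert hg
  refine stateECE_induction (fun s => g ∉ s.2 → ∃ j, g ∈ s.1 j) (by simp) ?_ k
  intro P R a g' _ _ hP hg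
  refine resolve_induction (fun Q => ∃ j, g ∈ Q j) ?_ _ _ ?_
  · rintro Q ⟨j, hj⟩
    obtain ⟨σ, -, hel⟩ := exists_perm_elimOnce_eq (b := b) (P := Q)
    exact ⟨σ.symm j, by rw [hel]; simpa only [Equiv.apply_symm_apply]⟩
  · by_cases hgg : g = g'
    · subst hgg
      exact ⟨a, give_self ▸ mem_insert_self g (P a)⟩
    · obtain ⟨j, hj⟩ := hP fun hR => hg (mem_erase.mpr ⟨hgg, hR⟩)
      exact ⟨j, subset_give j hj⟩

lemma card_stateECE_snd_le (hsrc : ∀ k, (sources b (stateECE b k).1).Nonempty) :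
    ∀ k, #(stateECE b k).2 ≤ m - k
  | 0 => by simp [stateECE]
  | k + 1 => by
    have ih := card_stateECE_snd_le hsrc k
    by_cases hR : (stateECE b k).2.Nonempty
    · obtain ⟨a, ha⟩ := exists_priAgent_eq_some (hsrc k)
      rw [stateECE_succ_of_priAgent_eq_some hR ha, card_erase_of_mem (preferredItem_mem _ hR)]
      omega
    · rw [stateECE_succ_of_not_nonempty hR, not_nonempty_iff_eq_empty.mp hR, card_empty]
      exact Nat.zero_le _

lemma EF1From_preferredItemECE (b : Fin n → SetBid m) (i : Fin n) :
    EF1From 1 (b i).val (PreferredItemECE b) i :=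
  EF1From_stateECE i m

lemma exists_mem_preferredItemECE (hsrc : ∀ k, (sources b (stateECE b k).1).Nonempty)
    (g : Fin m) : ∃ j, g ∈ PreferredItemECE b j := by
  have hR : (stateECE b m).2 = ∅ := card_eq_zero.mp (by simpa using card_stateECE_snd_le hsrc m)
  exact exists_mem_stateECE_of_notMem m (hR ▸ notMem_empty g)

end Run

section TwoAgents

lemma fin_two_eq_or_eq_swap : ∀ i k : Fin 2, k = i ∨ k = Equiv.swap 0 1 i := by decide

lemma perm_fin_two_eq : ∀ σ : Equiv.Perm (Fin 2), σ = 1 ∨ σ = Equiv.swap 0 1 := by decide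

variable {b : Fin 2 → SetBid m} {P : Fin 2 → Finset (Fin m)}

lemma envies_swap_of_not_sources_nonempty (h : ¬ (sources b P).Nonempty) (k : Fin 2) :
    envies b P k (Equiv.swap 0 1 k) := by
  obtain ⟨l, hl⟩ : ∃ l, envies b P l (Equiv.swap 0 1 k) := by
    by_contra! hno
    exact h ⟨_, mem_sources.mpr hno⟩
  rcases fin_two_eq_or_eq_swap k l with rfl | rfl
  · exact hl
  · exact absurd hl (not_envies_self _)

lemma sources_elimOnce_nonempty_of_not_nonempty (h : ¬ (sources b P).Nonempty) :
    (sources b (elimOnce b P)).Nonempty := by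
  have hswap : Equiv.swap 0 1 ∈ cycleSet b P := mem_filter.mpr ⟨mem_univ _,
    Equiv.Perm.isCycle_swap (by decide), fun k _ => envies_swap_of_not_sources_nonempty h k⟩
  obtain ⟨σ, hσ, hel⟩ := exists_mem_cycleSet_elimOnce_eq ⟨_, hswap⟩
  obtain rfl : σ = Equiv.swap 0 1 :=
    (perm_fin_two_eq σ).resolve_left (mem_filter.mp hσ).2.1.ne_one
  refine ⟨0, mem_sources.mpr fun k hk => ?_⟩
  rcases fin_two_eq_or_eq_swap k 0 with h0 | h0
  · exact not_envies_self k (h0 ▸ hk)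
  · rw [h0, hel] at hk
    have hk' := envies_swap_of_not_sources_nonempty h k
    simp only [envies, Equiv.swap_apply_self] at hk hk'
    exact lt_asymm hk hk'

lemma sources_resolve_succ_nonempty (fuel : ℕ) (P : Fin 2 → Finset (Fin m)) :
    (sources b (resolve b (fuel + 1) P)).Nonempty := by
  rw [resolve]
  split_ifs with h
  · exact h
  · have h' := sources_elimOnce_nonempty_of_not_nonempty h
    rwa [resolve_of_sources_nonempty h']

lemma sources_stateECE_nonempty (k : ℕ) : (sources b (stateECE b k).1).Nonempty :=
  stateECE_induction (fun s => (sources b s.1).Nonempty) ⟨0, mem_sources.mpr fun _ => lt_irrefl _⟩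
    (fun _ _ _ _ _ _ _ => sources_resolve_succ_nonempty 4 _) k

lemma EF1From.half_of_le {v : Finset (Fin m) → ℝ} (hnn : ∀ S, 0 ≤ v S) (hv : Monotone v)
    (hsub : ∀ S T, v (S ∪ T) ≤ v S + v T) {T A : Fin 2 → Finset (Fin m)} {i : Fin 2}
    (hcover : ∀ g, ∃ j, g ∈ T j) (hT : EF1From 1 v T i) (hle : v (T i) ≤ v (A i)) :
    EF1From (1 / 2) v A i := by
  have hcover' : ∀ g, g ∈ T i ∨ g ∈ T (Equiv.swap 0 1 i) := fun g => by
    obtain ⟨j, hj⟩ := hcover g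
    rcases fin_two_eq_or_eq_swap i j with rfl | rfl
    exacts [Or.inl hj, Or.inr hj]
  intro l hl
  obtain ⟨g, hg, hle'⟩ := exists_erase_val_le_two_mul hnn hv hsub hcover'
    (fun hY => (hT _ hY).imp fun _ ⟨hg, h⟩ => ⟨hg, by simpa only [one_mul] using h⟩) hl
  exact ⟨g, hg, by linarith⟩

end TwoAgents

end SubECE

/-- For any instance with exactly 2 agents whose true valuations are
nonnegative monotone subadditive set functions, and any bid profile in which agent
`i`'s bid is a best response to the other agent's bid, the allocation produced by
Preferred-Item-E-C-E is `(1/2)`-EF1 from agent `i`'s perspective with respect to agent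
`i`'s true valuation. -/
theorem preferredItem_two_subadditive_best_response_half_EF1 {m : ℕ}
    (v : Fin 2 → Finset (Fin m) → ℝ)
    (hnn : ∀ i S, 0 ≤ v i S)
    (hmono : ∀ i (S T : Finset (Fin m)), v i S ≤ v i (S ∪ T))
    (hsub : ∀ i (S T : Finset (Fin m)), v i (S ∪ T) ≤ v i S + v i T)
    (b : Fin 2 → SetBid m) (i : Fin 2)
    (hbr : BestResponse PreferredItemECE (v i) b i) :
    EF1From (1 / 2) (v i) (PreferredItemECE b) i := by
  set truthful : SetBid m := ⟨v i, hnn i, hmono i, hsub i, (b i).pref⟩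
  have hEF1 := EF1From_preferredItemECE (Function.update b i truthful) i
  rw [Function.update_self] at hEF1
  exact hEF1.half_of_le (hnn i) (monotone_of_le_union (hmono i)) (hsub i)
    (exists_mem_preferredItemECE sources_stateECE_nonempty) (hbr truthful)
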